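/- arXiv:2111.07415 — 2 statements merged into one kernel-verified Lean document; each statement's English description precedes it below -/
import Mathlib

section
/- For every m ≥ 4, the number of codewords of RC_m whose left-most bit c_{m−1} equals 0 is exactly N(m−3) + N(m−4). -/
/-- The RR constraint: no index `i` with `i + 2 ≤ m - 1` such that `c i = 0` and `c (i+2) = 0`
(bit `false` plays the role of `0`, bit `true` the role of `1`). -/
def RRok (m : ℕ) (c : Fin m → Bool) : Prop :=
  ∀ i j : Fin m, (j : ℕ) = (i : ℕ) + 2 → ¬(c i = false ∧ c j = false)

instance (m : ℕ) : DecidablePred (RRok m) := fun c => by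
  unfold RRok; infer_instance

/-- The LOCO code `RC_m`: all binary words of length `m` satisfying the RR constraint. -/
def RC (m : ℕ) : Finset (Fin m → Bool) := Finset.univ.filter (RRok m)

/-- `N m = |RC_m|`. -/
def N (m : ℕ) : ℕ := (RC m).card


/-!
A word whose top bit is `0` has `1` two places below it. If the next bit is `1`, the top three
bits are `011`; otherwise the bit two places below that is also forced, and the top four bits are
`0011`. A top block whose two lowest bits are `1` meets no RR constraint across its boundary, so the
lower `m - 3`, resp. `m - 4`, bits range exactly over `RC (m - 3)`, resp. `RC (m - 4)`.
-/

namespace RRok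

variable {m : ℕ} {c : Fin m → Bool}

theorem eq_true_of_eq_false (hc : RRok m c) {i j : Fin m} (hij : (j : ℕ) = i + 2)
    (hj : c j = false) : c i = true := by
  simpa using fun hi => hc i j hij ⟨hi, hj⟩

theorem append_iff {k n : ℕ} {d : Fin k → Bool} {s : Fin n → Bool}
    (hs_low : ∀ i : Fin n, (i : ℕ) < 2 → s i = true) :
    RRok (k + n) (Fin.append d s) ↔ RRok k d ∧ RRok n s := by
  constructor
  · intro h
    refine ⟨fun i j hij => ?_, fun i j hij => ?_⟩
    · simpa using h (Fin.castAdd n i) (Fin.castAdd n j) hij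
    · simpa using h (Fin.natAdd k i) (Fin.natAdd k j) (by simp [hij]; omega)
  · rintro ⟨hd, hs⟩ i j hij
    induction i using Fin.addCases with
    | left i =>
      induction j using Fin.addCases with
      | left j => simpa using hd i j (by simpa using hij)
      | right j => simp [hs_low j (by simp at hij; omega)]
    | right i =>
      induction j using Fin.addCases with
      | left j => simp at hij; omega
      | right j => simpa using hs i j (by simp at hij; omega)

end RRok

@[simp]
theorem mem_RC {m : ℕ} {c : Fin m → Bool} : c ∈ RC m ↔ RRok m c := by
  simp [RC]

theorem append_castAdd_eq_of_natAdd_eq {α : Type*} {k n : ℕ} {c : Fin (k + n) → α}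
    {s : Fin n → α} (hc : ∀ i, c (Fin.natAdd k i) = s i) :
    Fin.append (fun i => c (Fin.castAdd n i)) s = c := by
  rw [← funext hc, Fin.append_castAdd_natAdd]

theorem card_RC_filter_natAdd_eq {k n : ℕ} {s : Fin n → Bool}
    (hs_low : ∀ i : Fin n, (i : ℕ) < 2 → s i = true) (hs : RRok n s) :
    ((RC (k + n)).filter (fun c => ∀ i, c (Fin.natAdd k i) = s i)).card = N k := by
  refine Finset.card_nbij' (fun c i => c (Fin.castAdd n i)) (Fin.append · s) ?_ ?_ ?_ ?_
  · intro c hc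
    obtain ⟨hc, hcs⟩ := Finset.mem_filter.1 hc
    rw [mem_RC, ← append_castAdd_eq_of_natAdd_eq hcs, RRok.append_iff hs_low] at hc
    simpa using hc.1
  · intro d hd
    simp_all [RRok.append_iff hs_low]
  · intro c hc
    exact append_castAdd_eq_of_natAdd_eq (Finset.mem_filter.1 hc).2
  · intro d _
    simp

theorem card_RC_add_four_filter_eq_false (k : ℕ) :
    ((RC (k + 4)).filter (fun c => c ⟨k + 3, by omega⟩ = false)).card = N (k + 1) + N k := by
  rw [← Finset.card_filter_add_card_filter_not
    (fun c : Fin (k + 4) → Bool => c ⟨k + 2, by omega⟩ = true), Finset.filter_filter,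
    Finset.filter_filter]
  -- the tuples `![…]` list the top block from its lowest bit: `011` and `0011`
  congr 1
  · refine (congrArg Finset.card (Finset.filter_congr fun c hc => ?_)).trans
      (card_RC_filter_natAdd_eq (k := k + 1) (s := ![true, true, false]) (by decide) (by decide))
    have hk₁ := (mem_RC.1 hc).eq_true_of_eq_false
      (i := ⟨k + 1, by omega⟩) (j := ⟨k + 3, by omega⟩) rfl
    constructor <;> simp_all [Fin.forall_fin_succ, Fin.natAdd]
  · refine (congrArg Finset.card (Finset.filter_congr fun c hc => ?_)).trans
      (card_RC_filter_natAdd_eq (k := k) (s := ![true, true, false, false]) (by decide) (by decide))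
    have hk := (mem_RC.1 hc).eq_true_of_eq_false
      (i := ⟨k, by omega⟩) (j := ⟨k + 2, by omega⟩) rfl
    have hk₁ := (mem_RC.1 hc).eq_true_of_eq_false
      (i := ⟨k + 1, by omega⟩) (j := ⟨k + 3, by omega⟩) rfl
    constructor <;> simp_all [Fin.forall_fin_succ, Fin.natAdd]

/-- For `m ≥ 4`, the number of codewords of `RC_m` whose left-most bit `c (m-1)` equals `0`
is exactly `N (m-3) + N (m-4)`. -/
theorem stmt5 (m : ℕ) (hm : 4 ≤ m) :
    ((RC m).filter (fun c => c ⟨m - 1, by omega⟩ = false)).card = N (m - 3) + N (m - 4) := by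
  obtain ⟨k, rfl⟩ := Nat.exists_eq_add_of_le' hm
  simpa using card_RC_add_four_filter_eq_false k
end

section
/- The capacity of the constraint forbidding 000 and 010 equals the golden-ratio capacity of the RLL (0,1) constraint: lim_{m→∞} (log₂ N(m)) / m = log₂((1 + √5)/2). -/
/-!
The RR constraint only couples bits two positions apart, so a word satisfies it exactly when its
even-indexed and odd-indexed subwords have no two adjacent zeros. Words of length `n` without
adjacent zeros are counted by `fib (n + 2)`, which lies between `φ ^ n` and `φ ^ (n + 1)`. Hence
`φ ^ m ≤ N m ≤ φ ^ 2 * φ ^ m`, and `log₂ (N m) / m → log₂ φ`.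
-/

open Finset Filter Topology Real
open scoped goldenRatio

def NoAdjZeros (n : ℕ) (c : Fin n → Bool) : Prop :=
  ∀ i j : Fin n, (j : ℕ) = (i : ℕ) + 1 → ¬(c i = false ∧ c j = false)

instance (n : ℕ) : DecidablePred (NoAdjZeros n) := fun c => by
  unfold NoAdjZeros; infer_instance

theorem card_filter_eq_sum_cons {α : Type*} [Fintype α] {n : ℕ} (p : (Fin (n + 1) → α) → Prop)
    [DecidablePred p] : #{c | p c} = ∑ a, #{t : Fin n → α | p (Fin.cons a t)} := by
  simp only [card_filter]
  rw [← (Fin.consEquiv fun _ => α).sum_comp, Fintype.sum_prod_type]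
  rfl

theorem noAdjZeros_cons_true {n : ℕ} (t : Fin n → Bool) :
    NoAdjZeros (n + 1) (Fin.cons true t) ↔ NoAdjZeros n t := by
  simp [NoAdjZeros, Fin.forall_fin_succ]

theorem noAdjZeros_cons_false {n : ℕ} (t : Fin (n + 1) → Bool) :
    NoAdjZeros (n + 2) (Fin.cons false t) ↔ t 0 = true ∧ NoAdjZeros (n + 1) t := by
  simp [NoAdjZeros, Fin.forall_fin_succ]

theorem card_noAdjZeros_add_two (n : ℕ) :
    #{c | NoAdjZeros (n + 2) c} = #{c | NoAdjZeros (n + 1) c} + #{c | NoAdjZeros n c} := by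
  rw [card_filter_eq_sum_cons, Fintype.sum_bool]
  simp only [noAdjZeros_cons_true, noAdjZeros_cons_false]
  rw [card_filter_eq_sum_cons (fun t => t 0 = true ∧ NoAdjZeros (n + 1) t), Fintype.sum_bool]
  simp [noAdjZeros_cons_true]

theorem card_noAdjZeros : ∀ n, #{c | NoAdjZeros n c} = Nat.fib (n + 2)
  | 0 => by decide
  | 1 => by decide
  | n + 2 => by
    rw [card_noAdjZeros_add_two, card_noAdjZeros (n + 1), card_noAdjZeros n, add_comm]
    exact Nat.fib_add_two.symm

def finEvenOddEquiv (m : ℕ) : Fin ((m + 1) / 2) ⊕ Fin (m / 2) ≃ Fin m where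
  toFun := Sum.elim (fun k => ⟨2 * k, by omega⟩) (fun k => ⟨2 * k + 1, by omega⟩)
  invFun i := if h : (i : ℕ) % 2 = 0 then .inl ⟨i / 2, by omega⟩ else .inr ⟨i / 2, by omega⟩
  left_inv k := by cases k <;> grind
  right_inv i := by grind

@[simp]
theorem finEvenOddEquiv_inl_val {m : ℕ} (k : Fin ((m + 1) / 2)) :
    (finEvenOddEquiv m (.inl k) : ℕ) = 2 * k := rfl

@[simp]
theorem finEvenOddEquiv_inr_val {m : ℕ} (k : Fin (m / 2)) :
    (finEvenOddEquiv m (.inr k) : ℕ) = 2 * k + 1 := rfl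

theorem rrOk_iff_noAdjZeros_evenOdd {m : ℕ} (c : Fin m → Bool) :
    RRok m c ↔ NoAdjZeros _ (c ∘ finEvenOddEquiv m ∘ Sum.inl) ∧
      NoAdjZeros _ (c ∘ finEvenOddEquiv m ∘ Sum.inr) := by
  constructor
  · intro hc
    refine ⟨fun i j hij => hc _ _ ?_, fun i j hij => hc _ _ ?_⟩ <;>
      simp only [Function.comp_apply, finEvenOddEquiv_inl_val, finEvenOddEquiv_inr_val] <;> omega
  · rintro ⟨heven, hodd⟩ i j hij
    obtain ⟨x, rfl⟩ := (finEvenOddEquiv m).surjective i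
    obtain ⟨y, rfl⟩ := (finEvenOddEquiv m).surjective j
    rcases x with k | k <;> rcases y with l | l <;>
      simp only [finEvenOddEquiv_inl_val, finEvenOddEquiv_inr_val] at hij
    · exact heven k l (by omega)
    · omega
    · omega
    · exact hodd k l (by omega)

theorem N_eq_fib_mul_fib (m : ℕ) : N m = Nat.fib ((m + 1) / 2 + 2) * Nat.fib (m / 2 + 2) := by
  let e := ((finEvenOddEquiv m).arrowCongr (Equiv.refl Bool)).symm.trans
    (Equiv.sumArrowEquivProdArrow _ _ _)
  rw [← card_noAdjZeros, ← card_noAdjZeros, ← card_product, N, RC]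
  exact card_equiv e fun c => by
    simp only [mem_filter, mem_univ, true_and, mem_product, rrOk_iff_noAdjZeros_evenOdd]
    rfl

theorem goldenRatio_pow_add_two (n : ℕ) : φ ^ (n + 2) = φ ^ n + φ ^ (n + 1) := by
  linarith [goldenRatio_pow_sub_goldenRatio_pow n]

theorem goldenRatio_pow_le_fib : ∀ n, φ ^ n ≤ Nat.fib (n + 2)
  | 0 => by simp
  | 1 => by norm_num [goldenRatio_lt_two.le]
  | n + 2 => by
    rw [goldenRatio_pow_add_two, Nat.fib_add_two, Nat.cast_add]
    exact add_le_add (goldenRatio_pow_le_fib n) (goldenRatio_pow_le_fib (n + 1))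

theorem fib_le_goldenRatio_pow : ∀ n, (Nat.fib (n + 1) : ℝ) ≤ φ ^ n
  | 0 => by simp
  | 1 => by norm_num [one_lt_goldenRatio.le]
  | n + 2 => by
    rw [goldenRatio_pow_add_two, Nat.fib_add_two, Nat.cast_add]
    exact add_le_add (fib_le_goldenRatio_pow n) (fib_le_goldenRatio_pow (n + 1))

theorem goldenRatio_pow_le_N (m : ℕ) : φ ^ m ≤ N m := by
  rw [N_eq_fib_mul_fib, Nat.cast_mul]
  calc φ ^ m = φ ^ ((m + 1) / 2) * φ ^ (m / 2) := by rw [← pow_add]; congr 1; omega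
    _ ≤ _ := by gcongr <;> exact goldenRatio_pow_le_fib _

theorem N_le_goldenRatio_sq_mul_pow (m : ℕ) : (N m : ℝ) ≤ φ ^ 2 * φ ^ m := by
  rw [N_eq_fib_mul_fib, Nat.cast_mul]
  calc _ ≤ φ ^ ((m + 1) / 2 + 1) * φ ^ (m / 2 + 1) := by
        gcongr <;> exact fib_le_goldenRatio_pow _
    _ = φ ^ 2 * φ ^ m := by rw [← pow_add, ← pow_add]; congr 1; omega

theorem tendsto_log_div_of_pow_le_of_le_mul_pow {x : ℕ → ℝ} {a C : ℝ} (ha : 0 < a)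
    (hlow : ∀ m, a ^ m ≤ x m) (hup : ∀ m, x m ≤ C * a ^ m) :
    Tendsto (fun m : ℕ => log (x m) / m) atTop (𝓝 (log a)) := by
  have hx (m : ℕ) : 0 < x m := (pow_pos ha m).trans_le (hlow m)
  have hC : 0 < C := by simpa using (hx 0).trans_le (hup 0)
  have hlim : Tendsto (fun m : ℕ => log a + log C / m) atTop (𝓝 (log a)) := by
    simpa using tendsto_const_nhds.add (tendsto_const_div_atTop_nhds_zero_nat (log C))
  refine tendsto_of_tendsto_of_tendsto_of_le_of_le' tendsto_const_nhds hlim ?_ ?_ <;>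
    filter_upwards [eventually_gt_atTop 0] with m hm
  · rw [le_div_iff₀ (by positivity), mul_comm, ← log_pow]
    exact log_le_log (by positivity) (hlow m)
  · rw [div_le_iff₀ (by positivity), add_mul, div_mul_cancel₀ _ (by positivity), mul_comm,
      ← log_pow, add_comm, ← log_mul hC.ne' (by positivity)]
    exact log_le_log (hx m) (hup m)

theorem tendsto_logb_div_of_pow_le_of_le_mul_pow {x : ℕ → ℝ} {a C : ℝ} (b : ℝ) (ha : 0 < a)
    (hlow : ∀ m, a ^ m ≤ x m) (hup : ∀ m, x m ≤ C * a ^ m) :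
    Tendsto (fun m : ℕ => logb b (x m) / m) atTop (𝓝 (logb b a)) := by
  simp only [logb, div_right_comm _ (log b)]
  exact (tendsto_log_div_of_pow_le_of_le_mul_pow ha hlow hup).div_const _

/-- The capacity of the constraint forbidding `000` and `010`:
`lim_{m→∞} log₂(N m) / m = log₂((1 + √5)/2)`. -/
theorem stmt11 :
    Filter.Tendsto (fun m : ℕ => Real.logb 2 (N m) / m) Filter.atTop
      (nhds (Real.logb 2 ((1 + Real.sqrt 5) / 2))) :=
  tendsto_logb_div_of_pow_le_of_le_mul_pow 2 goldenRatio_pos goldenRatio_pow_le_N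
    N_le_goldenRatio_sq_mul_pow
end
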